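/- arXiv:2104.05108 — 3 statements merged into one kernel-verified Lean document; each statement's English description precedes it below -/
import Mathlib

section
/- Let α₀ ∈ (0, π/3). If ρ < (1 − (1/2 + cos α₀)^{1/2})² / (2 cos α₀ − 1) and every side length of a triangle lies in (ℓ(1−2ρ), ℓ(1+2ρ)) for some ℓ > 0, then every interior angle of the triangle is strictly greater than α₀. -/
open Real EuclideanGeometry

set_option maxHeartbeats 800000 in
private lemma key_aux (c k ℓ ρ a b d : ℝ) (hℓ : 0 < ℓ) (hchalf : 1/2 < c) (hc1 : c < 1)
    (hknn : 0 ≤ k) (hk2 : k^2 = 1/2 + c) (hk1 : 1 < k)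
    (hρ' : ρ * (2*c - 1) < (1 - k)^2) (hρpos : 0 < ρ)
    (ha1 : ℓ * (1 - 2*ρ) < a) (ha2 : a < ℓ * (1 + 2*ρ))
    (hb1 : ℓ * (1 - 2*ρ) < b) (hb2 : b < ℓ * (1 + 2*ρ))
    (hd1 : ℓ * (1 - 2*ρ) < d) :
    a*a + b*b - d*d < 2*(a*b)*c := by
  have hts : 1 + 2*ρ < k * (1 - 2*ρ) := by nlinarith [hρ', hk2, hk1, hρpos]
  have hs : 0 < 1 - 2*ρ := by nlinarith [hts, hk1, hρpos, hknn]
  have hk1' : (0:ℝ) < k - 1 := by linarith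
  have h4ρ : 4*ρ < (k-1)*(1-2*ρ) := by nlinarith [hts]
  have hsq : 16*ρ^2 < ((k-1)*(1-2*ρ))^2 := by
    have h0 : -((k-1)*(1-2*ρ)) < 4*ρ := by nlinarith [mul_pos hk1' hs, hρpos]
    calc 16*ρ^2 = (4*ρ)^2 := by ring
      _ < ((k-1)*(1-2*ρ))^2 := sq_lt_sq' h0 h4ρ
  have hkc : (k-1)^2 ≤ c*(2*c-1) := by
    nlinarith [hk2, hk1, sq_nonneg (k-1), sq_nonneg (k*k-1), sq_nonneg ((k-1)*(k+1))]
  have h16 : 16*ρ^2 < (1-2*ρ)^2 * (c*(2*c-1)) := by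
    have := mul_le_mul_of_nonneg_right hkc (sq_nonneg (1-2*ρ))
    calc 16*ρ^2 < ((k-1)*(1-2*ρ))^2 := hsq
      _ = (k-1)^2 * (1-2*ρ)^2 := by ring
      _ ≤ c*(2*c-1) * (1-2*ρ)^2 := this
      _ = (1-2*ρ)^2 * (c*(2*c-1)) := by ring
  have ht2a : (1+2*ρ)^2 < (1/2+c)*(1-2*ρ)^2 := by
    have hsq2 : (1+2*ρ) * (1+2*ρ) < (k*(1-2*ρ)) * (k*(1-2*ρ)) :=
      mul_self_lt_mul_self (by linarith) hts
    calc (1+2*ρ)^2 = (1+2*ρ)*(1+2*ρ) := by ring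
      _ < (k*(1-2*ρ)) * (k*(1-2*ρ)) := hsq2
      _ = k^2 * (1-2*ρ)^2 := by ring
      _ = (1/2+c)*(1-2*ρ)^2 := by rw [hk2]
  clear hρ' hts h4ρ hsq hkc
  have hℓs : 0 < ℓ*(1-2*ρ) := mul_pos hℓ hs
  have hapos : 0 < a := lt_trans hℓs ha1
  have hbpos : 0 < b := lt_trans hℓs hb1
  have hℓ2 : (0:ℝ) < ℓ*ℓ := mul_pos hℓ hℓ
  have h1 : a - b < 4*ℓ*ρ := by nlinarith [ha2, hb1]
  have h2 : b - a < 4*ℓ*ρ := by nlinarith [hb2, ha1]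
  have A : (a-b)^2 < ℓ^2*(1-2*ρ)^2*(c*(2*c-1)) := by
    have habs : (a-b)^2 < (4*ℓ*ρ)^2 := sq_lt_sq' (by linarith) h1
    have hm := mul_lt_mul_of_pos_left h16 hℓ2
    calc (a-b)^2 < (4*ℓ*ρ)^2 := habs
      _ = ℓ*ℓ*(16*ρ^2) := by ring
      _ < ℓ*ℓ*((1-2*ρ)^2*(c*(2*c-1))) := hm
      _ = ℓ^2*(1-2*ρ)^2*(c*(2*c-1)) := by ring
  have B : a*b < ℓ^2*(1+2*ρ)^2 := by
    calc a*b < (ℓ*(1+2*ρ))*(ℓ*(1+2*ρ)) :=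
          mul_lt_mul'' ha2 hb2 hapos.le hbpos.le
      _ = ℓ^2*(1+2*ρ)^2 := by ring
  have C : ℓ^2*(1+2*ρ)^2 < ℓ^2*(1-2*ρ)^2*(1/2+c) := by
    have hm := mul_lt_mul_of_pos_left ht2a hℓ2
    calc ℓ^2*(1+2*ρ)^2 = ℓ*ℓ*((1+2*ρ)^2) := by ring
      _ < ℓ*ℓ*((1/2+c)*(1-2*ρ)^2) := hm
      _ = ℓ^2*(1-2*ρ)^2*(1/2+c) := by ring
  have E : a*b < ℓ^2*(1-2*ρ)^2*(1/2+c) := lt_trans B C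
  have F : 2*(1-c)*(a*b) < 2*(1-c)*(ℓ^2*(1-2*ρ)^2*(1/2+c)) := by
    have h1c : (0:ℝ) < 2*(1-c) := by linarith
    exact (mul_lt_mul_iff_right₀ h1c).2 E
  have D : ℓ^2*(1-2*ρ)^2 < d*d := by
    calc ℓ^2*(1-2*ρ)^2 = (ℓ*(1-2*ρ))*(ℓ*(1-2*ρ)) := by ring
      _ < d*d := mul_self_lt_mul_self hℓs.le hd1
  clear h1 h2 B C E h16 ht2a ha1 ha2 hb1 hb2 hd1
  nlinarith [A, F, D]

set_option maxHeartbeats 1000000 in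
theorem angles_gt_alpha_of_side_lengths
    (x y z : EuclideanSpace ℝ (Fin 2)) (h : AffineIndependent ℝ ![x, y, z])
    (α₀ ℓ ρ : ℝ) (hα : α₀ ∈ Set.Ioo 0 (π/3)) (hℓ : 0 < ℓ)
    (hρ : ρ < (1 - Real.sqrt (1/2 + Real.cos α₀))^2 / (2 * Real.cos α₀ - 1))
    (hxy : dist x y ∈ Set.Ioo (ℓ * (1 - 2*ρ)) (ℓ * (1 + 2*ρ)))
    (hyz : dist y z ∈ Set.Ioo (ℓ * (1 - 2*ρ)) (ℓ * (1 + 2*ρ)))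
    (hzx : dist z x ∈ Set.Ioo (ℓ * (1 - 2*ρ)) (ℓ * (1 + 2*ρ))) :
    α₀ < ∠ x y z ∧ α₀ < ∠ y z x ∧ α₀ < ∠ z x y := by
  obtain ⟨hα0, hα3⟩ := hα
  have hπ : (0:ℝ) < π := Real.pi_pos
  set c := Real.cos α₀ with hcdef
  have hchalf : 1/2 < c := by
    have := Real.strictAntiOn_cos ⟨hα0.le, by linarith⟩ ⟨by positivity, by linarith⟩ hα3
    rwa [Real.cos_pi_div_three] at this
  have hc1 : c < 1 := by
    have := Real.strictAntiOn_cos ⟨le_refl 0, hπ.le⟩ ⟨hα0.le, by linarith⟩ hα0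
    rwa [Real.cos_zero] at this
  set k := Real.sqrt (1/2 + c) with hkdef
  have hk2 : k^2 = 1/2 + c := Real.sq_sqrt (by linarith)
  have hknn : 0 ≤ k := Real.sqrt_nonneg _
  have hk1 : 1 < k := by nlinarith [hk2, hknn]
  have hρ' : ρ * (2*c - 1) < (1 - k)^2 := (lt_div_iff₀ (by linarith)).1 hρ
  -- ρ > 0 since the interval is nonempty
  have hρpos : 0 < ρ := by
    have h1 := hxy.1
    have h2 := hxy.2
    nlinarith [hℓ]
  have hs : 0 < 1 - 2*ρ := by
    by_contra hcon
    push_neg at hcon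
    have h1 := hxy.1
    have h2 := hxy.2
    nlinarith [hℓ, hρpos]
  have hℓs : 0 < ℓ*(1-2*ρ) := mul_pos hℓ hs
  have angle_lt : ∀ θ : ℝ, 0 ≤ θ → θ ≤ π → Real.cos θ < c → α₀ < θ := by
    intro θ h0 hle hcosθ
    by_contra hcon
    push_neg at hcon
    have := Real.strictAntiOn_cos.antitoneOn ⟨h0, hle⟩ ⟨hα0.le, by linarith⟩ hcon
    rw [← hcdef] at this
    linarith
  have main : ∀ p q r : EuclideanSpace ℝ (Fin 2),
      dist p q ∈ Set.Ioo (ℓ * (1 - 2*ρ)) (ℓ * (1 + 2*ρ)) →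
      dist r q ∈ Set.Ioo (ℓ * (1 - 2*ρ)) (ℓ * (1 + 2*ρ)) →
      dist p r ∈ Set.Ioo (ℓ * (1 - 2*ρ)) (ℓ * (1 + 2*ρ)) → α₀ < ∠ p q r := by
    intro p q r hpq hrq hpr
    have hlaw := EuclideanGeometry.law_cos p q r
    have hk := key_aux c k ℓ ρ (dist p q) (dist r q) (dist p r) hℓ hchalf hc1 hknn hk2
      hk1 hρ' hρpos hpq.1 hpq.2 hrq.1 hrq.2 hpr.1
    have habpos : 0 < dist p q * dist r q :=
      mul_pos (lt_trans hℓs hpq.1) (lt_trans hℓs hrq.1)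
    have hcos : Real.cos (∠ p q r) < c := by
      have h2 : 2 * dist p q * dist r q * Real.cos (∠ p q r) =
          dist p q * dist p q + dist r q * dist r q - dist p r * dist p r := by
        linarith [hlaw]
      nlinarith [h2, hk, habpos]
    exact angle_lt _ (EuclideanGeometry.angle_nonneg _ _ _)
      (EuclideanGeometry.angle_le_pi _ _ _) hcos
  refine ⟨?_, ?_, ?_⟩
  · exact main x y z hxy (by rwa [dist_comm]) (by rwa [dist_comm])
  · exact main y z x hyz (by rwa [dist_comm]) (by rwa [dist_comm])
  · exact main z x y hzx (by rwa [dist_comm]) (by rwa [dist_comm])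
end

section
/- Let 0 < r < R, α₀ ∈ (0, π/3), and suppose ρ < min{(R^{1/3}−r^{1/3})/(6(R^{1/3}+r^{1/3})), (1 − (1/2 + cos α₀)^{1/2})²/(2 cos α₀ − 1)} and ℓ ∈ (r/L(ρ), R/U(ρ)) with L(ρ)=(1−6ρ)/√3, U(ρ)=(1+6ρ)³/(√3(1−6ρ)²). Then any triangle whose side lengths all lie in (ℓ(1−2ρ), ℓ(1+2ρ)) has circumradius δ ∈ (r, R) and all interior angles strictly greater than α₀. -/
open Real EuclideanGeometry

/-- The circumradius of the triangle with vertices `x`, `y`, `z`. -/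
noncomputable def circumradius3 (x y z : EuclideanSpace ℝ (Fin 2))
    (h : AffineIndependent ℝ ![x, y, z]) : ℝ :=
  (⟨![x, y, z], h⟩ : Affine.Simplex ℝ (EuclideanSpace ℝ (Fin 2)) 2).circumradius

/-!
The side ratios are below `(1 + 2ρ) / (1 - 2ρ) < √(1/2 + cos α₀)`, and the law of cosines turns
this into `α₀ < A < π / 2` for every angle `A`. In an acute triangle some angle is at most `π / 3`
and some is in `[π / 3, π / 2)`, so the law of sines `a = 2 δ sin A` traps the circumradius `δ`
between `ℓ (1 - 2ρ) / √3 ≥ ℓ L(ρ) > r` and `ℓ (1 + 2ρ) / √3 ≤ ℓ U(ρ) < R`.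
-/

open Set

lemma cos_mem_Ioo_of_law_cos {lo s c₀ a b c γ : ℝ} (hlo : 0 < lo) (hs : s * s = 1 / 2 + c₀)
    (hc₀ : c₀ ∈ Ioo (1 / 2) 1) (ha : a ∈ Ioo lo (s * lo)) (hb : b ∈ Ioo lo (s * lo))
    (hc : c ∈ Ioo lo (s * lo)) (hlaw : c * c = a * a + b * b - 2 * a * b * γ) :
    γ ∈ Ioo 0 c₀ := by
  obtain ⟨hc₀l, hc₀u⟩ := hc₀
  have hs1 : 1 < s := lt_of_mul_lt_mul_right (by linarith [ha.1.trans ha.2]) hlo.le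
  have hab : 0 < a * b := mul_pos (hlo.trans ha.1) (hlo.trans hb.1)
  have hc2 : lo * lo < c * c := mul_self_lt_mul_self hlo.le hc.1
  have hc2' : c * c < (s * lo) * (s * lo) := mul_self_lt_mul_self (hlo.trans hc.1).le hc.2
  constructor
  · have ha2 : lo * lo < a * a := mul_self_lt_mul_self hlo.le ha.1
    have hb2 : lo * lo < b * b := mul_self_lt_mul_self hlo.le hb.1
    by_contra! hγ
    nlinarith [mul_nonpos_of_nonneg_of_nonpos hab.le hγ]
  · -- `a² + b² - 2 c₀ a b = (a - b)² + (3 - 2 s²) a b < ((s - 1)² + (3 - 2 s²) s²) lo²`, and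
    -- `lo² - ((s - 1)² + (3 - 2 s²) s²) lo² = 2 s (s - 1) (s² + s - 1) lo² ≥ 0`
    have hdiff : (a - b) ^ 2 < ((s - 1) * lo) ^ 2 :=
      sq_lt_sq' (by linarith [ha.1, hb.2]) (by linarith [ha.2, hb.1])
    have hprod : (3 - 2 * (s * s)) * (a * b) < (3 - 2 * (s * s)) * ((s * lo) * (s * lo)) :=
      mul_lt_mul_of_pos_left (mul_lt_mul'' ha.2 hb.2 (hlo.trans ha.1).le (hlo.trans hb.1).le)
        (by linarith)
    have hpoly : 0 ≤ (s - 1) * (s * s + s - 1) := mul_nonneg (by linarith) (by nlinarith)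
    have hquad : a * a + b * b - 2 * c₀ * (a * b) < lo * lo := by
      nlinarith [mul_le_mul_of_nonneg_left hpoly
        (mul_nonneg (mul_self_nonneg lo) (by linarith : (0 : ℝ) ≤ s))]
    exact lt_of_mul_lt_mul_left (by linarith : a * b * γ < a * b * c₀) hab.le

lemma div_sqrt_three_lt_of_lt_two_mul_mul_sin {lo δ θ : ℝ} (hδ : 0 ≤ δ) (hθ₀ : 0 ≤ θ)
    (hθ : θ ≤ π / 3) (h : lo < 2 * δ * sin θ) : lo / √3 < δ := by
  have hsin : sin θ ≤ √3 / 2 :=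
    sin_pi_div_three ▸ sin_le_sin_of_le_of_le_pi_div_two (by linarith [pi_pos])
      (by linarith [pi_pos]) hθ
  rw [div_lt_iff₀ (by positivity)]
  nlinarith [mul_le_mul_of_nonneg_left hsin hδ]

lemma lt_div_sqrt_three_of_two_mul_mul_sin_lt {hi δ θ : ℝ} (hδ : 0 ≤ δ) (hθ : π / 3 ≤ θ)
    (hθ₂ : θ ≤ π / 2) (h : 2 * δ * sin θ < hi) : δ < hi / √3 := by
  have hsin : √3 / 2 ≤ sin θ :=
    sin_pi_div_three ▸ sin_le_sin_of_le_of_le_pi_div_two (by linarith [pi_pos]) hθ₂ hθ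
  rw [lt_div_iff₀ (by positivity)]
  nlinarith [mul_le_mul_of_nonneg_left hsin hδ]

lemma mem_Ioo_div_sqrt_three_of_two_mul_mul_sin_mem_Ioo {A B C δ lo hi : ℝ}
    (hA : A ∈ Ico 0 (π / 2)) (hB : B ∈ Ico 0 (π / 2)) (hC : C ∈ Ico 0 (π / 2))
    (hsum : A + B + C = π) (hδ : 0 ≤ δ) (ha : 2 * δ * sin A ∈ Ioo lo hi)
    (hb : 2 * δ * sin B ∈ Ioo lo hi) (hc : 2 * δ * sin C ∈ Ioo lo hi) :
    δ ∈ Ioo (lo / √3) (hi / √3) := by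
  constructor
  · obtain h | h | h : A ≤ π / 3 ∨ B ≤ π / 3 ∨ C ≤ π / 3 := by
      by_contra! h
      linarith [h.1, h.2.1, h.2.2]
    · exact div_sqrt_three_lt_of_lt_two_mul_mul_sin hδ hA.1 h ha.1
    · exact div_sqrt_three_lt_of_lt_two_mul_mul_sin hδ hB.1 h hb.1
    · exact div_sqrt_three_lt_of_lt_two_mul_mul_sin hδ hC.1 h hc.1
  · obtain h | h | h : π / 3 ≤ A ∨ π / 3 ≤ B ∨ π / 3 ≤ C := by
      by_contra! h
      linarith [h.1, h.2.1, h.2.2]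
    · exact lt_div_sqrt_three_of_two_mul_mul_sin_lt hδ h hA.2.le ha.2
    · exact lt_div_sqrt_three_of_two_mul_mul_sin_lt hδ h hB.2.le hb.2
    · exact lt_div_sqrt_three_of_two_mul_mul_sin_lt hδ h hC.2.le hc.2

lemma cos_mem_Ioo_one_half_one {α₀ : ℝ} (hα : α₀ ∈ Ioo 0 (π / 3)) : cos α₀ ∈ Ioo (1 / 2) 1 := by
  obtain ⟨hα0, hα3⟩ := hα
  constructor
  · simpa [cos_pi_div_three] using
      cos_lt_cos_of_nonneg_of_le_pi hα0.le (by linarith [pi_pos]) hα3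
  · simpa using cos_lt_cos_of_nonneg_of_le_pi le_rfl (by linarith [pi_pos]) hα0

section Geometry

variable {V P : Type*} [NormedAddCommGroup V] [InnerProductSpace ℝ V] [MetricSpace P]
  [NormedAddTorsor V P]

theorem angle_mem_Ioo_of_dist_mem_Ioo {p₁ p₂ p₃ : P} {lo α₀ : ℝ} (hlo : 0 < lo)
    (hα : α₀ ∈ Ioo 0 (π / 3))
    (h₁₂ : dist p₁ p₂ ∈ Ioo lo (√(1 / 2 + cos α₀) * lo))
    (h₂₃ : dist p₂ p₃ ∈ Ioo lo (√(1 / 2 + cos α₀) * lo))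
    (h₃₁ : dist p₃ p₁ ∈ Ioo lo (√(1 / 2 + cos α₀) * lo)) :
    ∠ p₁ p₂ p₃ ∈ Ioo α₀ (π / 2) := by
  have hc₀ := cos_mem_Ioo_one_half_one hα
  have hlaw := law_cos p₁ p₂ p₃
  rw [dist_comm p₃ p₂, dist_comm p₁ p₃] at hlaw
  obtain ⟨hcos0, hcosα⟩ := cos_mem_Ioo_of_law_cos hlo
    (mul_self_sqrt (by linarith [hc₀.1])) hc₀ h₁₂ h₂₃ h₃₁ hlaw
  have hθπ := angle_le_pi p₁ p₂ p₃
  constructor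
  · exact (strictAntiOn_cos.lt_iff_gt ⟨angle_nonneg p₁ p₂ p₃, hθπ⟩
      ⟨hα.1.le, by linarith [hα.2, pi_pos]⟩).1 hcosα
  · by_contra! h
    exact (cos_nonpos_of_pi_div_two_le_of_le h (by linarith [pi_pos])).not_gt hcos0

theorem Affine.Triangle.dist_eq_two_mul_circumradius_mul_sin_angle (t : Affine.Triangle ℝ P)
    {i₁ i₂ i₃ : Fin 3} (h₁₂ : i₁ ≠ i₂) (h₁₃ : i₁ ≠ i₃) (h₂₃ : i₂ ≠ i₃) :
    dist (t.points i₁) (t.points i₃) =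
      2 * t.circumradius * sin (∠ (t.points i₁) (t.points i₂) (t.points i₃)) := by
  have hsin := sin_pos_of_not_collinear
    ((affineIndependent_iff_not_collinear_of_ne h₁₂ h₁₃ h₂₃).1 t.independent)
  exact (div_eq_iff hsin.ne').1 (t.dist_div_sin_angle_eq_two_mul_circumradius h₁₂ h₁₃ h₂₃)

theorem circumradius_mem_Ioo_of_angle_lt_pi_div_two {x y z : P}
    (h : AffineIndependent ℝ ![x, y, z]) {lo hi : ℝ}
    (hA : ∠ x y z < π / 2) (hB : ∠ y z x < π / 2) (hC : ∠ z x y < π / 2)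
    (hxy : dist x y ∈ Ioo lo hi) (hyz : dist y z ∈ Ioo lo hi) (hzx : dist z x ∈ Ioo lo hi) :
    (⟨![x, y, z], h⟩ : Affine.Triangle ℝ P).circumradius ∈ Ioo (lo / √3) (hi / √3) := by
  set t : Affine.Triangle ℝ P := ⟨![x, y, z], h⟩
  have hzx' : dist x z = 2 * t.circumradius * sin (∠ x y z) :=
    t.dist_eq_two_mul_circumradius_mul_sin_angle (i₁ := 0) (i₂ := 1) (i₃ := 2)
      (by decide) (by decide) (by decide)
  have hxy' : dist y x = 2 * t.circumradius * sin (∠ y z x) :=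
    t.dist_eq_two_mul_circumradius_mul_sin_angle (i₁ := 1) (i₂ := 2) (i₃ := 0)
      (by decide) (by decide) (by decide)
  have hyz' : dist z y = 2 * t.circumradius * sin (∠ z x y) :=
    t.dist_eq_two_mul_circumradius_mul_sin_angle (i₁ := 2) (i₂ := 0) (i₃ := 1)
      (by decide) (by decide) (by decide)
  rw [dist_comm] at hzx' hxy' hyz'
  have hsum : ∠ x y z + ∠ y z x + ∠ z x y = π :=
    angle_add_angle_add_angle_eq_pi z (h.injective.ne (by decide : (1 : Fin 3) ≠ 0))
  exact mem_Ioo_div_sqrt_three_of_two_mul_mul_sin_mem_Ioo ⟨angle_nonneg _ _ _, hA⟩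
    ⟨angle_nonneg _ _ _, hB⟩ ⟨angle_nonneg _ _ _, hC⟩ hsum t.circumradius_nonneg
    (hzx' ▸ hzx) (hxy' ▸ hxy) (hyz' ▸ hyz)

end Geometry

lemma sub_div_six_mul_add_lt_one_sixth {u v : ℝ} (hu : 0 < u) (hv : 0 < v) :
    (v - u) / (6 * (v + u)) < 1 / 6 := by
  rw [div_lt_div_iff₀ (by positivity) (by norm_num)]
  linarith

lemma one_add_two_mul_lt_sqrt_mul_one_sub_two_mul {c ρ : ℝ} (hc : 1 / 2 < c)
    (hρ : ρ < (1 - √(1 / 2 + c)) ^ 2 / (2 * c - 1)) :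
    1 + 2 * ρ < √(1 / 2 + c) * (1 - 2 * ρ) := by
  set s := √(1 / 2 + c)
  have hs : s * s = 1 / 2 + c := mul_self_sqrt (by linarith)
  have hs1 : 1 < s := (lt_sqrt zero_le_one).2 (by linarith)
  -- `2 c - 1 = 2 (s - 1) (s + 1)`, so the bound on `ρ` is `(s - 1) / (2 (s + 1))`
  have hbound : (1 - s) ^ 2 / (2 * c - 1) = (s - 1) / (2 * (s + 1)) := by
    rw [div_eq_div_iff (by linarith) (by linarith)]
    linear_combination (2 * (s - 1)) * hs
  rw [hbound, lt_div_iff₀ (by linarith)] at hρ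
  linarith

lemma lt_mul_one_sub_two_mul_div_sqrt_three {r ℓ ρ : ℝ} (hℓ : 0 ≤ ℓ) (hρ₀ : 0 ≤ ρ)
    (hρ : ρ < 1 / 6) (hrℓ : r / ((1 - 6 * ρ) / √3) < ℓ) : r < ℓ * (1 - 2 * ρ) / √3 := by
  rw [div_lt_iff₀ (div_pos (by linarith) (by positivity))] at hrℓ
  calc r < ℓ * ((1 - 6 * ρ) / √3) := hrℓ
    _ ≤ ℓ * ((1 - 2 * ρ) / √3) := by gcongr; linarith
    _ = ℓ * (1 - 2 * ρ) / √3 := (mul_div_assoc _ _ _).symm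

lemma mul_one_add_two_mul_div_sqrt_three_lt {R ℓ ρ : ℝ} (hℓ : 0 ≤ ℓ) (hρ₀ : 0 ≤ ρ)
    (hρ : ρ < 1 / 6) (hℓR : ℓ < R / ((1 + 6 * ρ) ^ 3 / (√3 * (1 - 6 * ρ) ^ 2))) :
    ℓ * (1 + 2 * ρ) / √3 < R := by
  have hden : 0 < √3 * (1 - 6 * ρ) ^ 2 := mul_pos (by positivity) (pow_pos (by linarith) 2)
  rw [lt_div_iff₀ (div_pos (by positivity) hden)] at hℓR
  have hpoly : (1 + 2 * ρ) * (1 - 6 * ρ) ^ 2 ≤ (1 + 6 * ρ) ^ 3 := by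
    nlinarith [mul_nonneg hρ₀ hρ₀, mul_nonneg (mul_nonneg hρ₀ hρ₀) hρ₀]
  calc ℓ * (1 + 2 * ρ) / √3 = ℓ * ((1 + 2 * ρ) / √3) := mul_div_assoc _ _ _
    _ ≤ ℓ * ((1 + 6 * ρ) ^ 3 / (√3 * (1 - 6 * ρ) ^ 2)) := by
      gcongr ℓ * ?_
      rw [div_le_div_iff₀ (by positivity) hden]
      nlinarith [mul_le_mul_of_nonneg_left hpoly (sqrt_nonneg 3)]
    _ < R := hℓR

theorem hardcore_satisfied_for_pseudo_periodic
    (r R α₀ ρ ℓ : ℝ) (hr : 0 < r) (hrR : r < R) (hα : α₀ ∈ Set.Ioo 0 (π/3))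
    (hρ0 : 0 < ρ)
    (hρ : ρ < min ((R ^ ((1:ℝ)/3) - r ^ ((1:ℝ)/3)) / (6 * (R ^ ((1:ℝ)/3) + r ^ ((1:ℝ)/3))))
      ((1 - Real.sqrt (1/2 + Real.cos α₀))^2 / (2 * Real.cos α₀ - 1)))
    (hℓ : ℓ ∈ Set.Ioo (r / ((1 - 6*ρ) / Real.sqrt 3))
      (R / ((1 + 6*ρ)^3 / (Real.sqrt 3 * (1 - 6*ρ)^2))))
    (x y z : EuclideanSpace ℝ (Fin 2)) (h : AffineIndependent ℝ ![x, y, z])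
    (hxy : dist x y ∈ Set.Ioo (ℓ * (1 - 2*ρ)) (ℓ * (1 + 2*ρ)))
    (hyz : dist y z ∈ Set.Ioo (ℓ * (1 - 2*ρ)) (ℓ * (1 + 2*ρ)))
    (hzx : dist z x ∈ Set.Ioo (ℓ * (1 - 2*ρ)) (ℓ * (1 + 2*ρ))) :
    circumradius3 x y z h ∈ Set.Ioo r R ∧
    (α₀ < ∠ x y z ∧ α₀ < ∠ y z x ∧ α₀ < ∠ z x y) := by
  have hρ6 : ρ < 1 / 6 := (hρ.trans_le (min_le_left _ _)).trans
    (sub_div_six_mul_add_lt_one_sixth (rpow_pos_of_pos hr _) (rpow_pos_of_pos (hr.trans hrR) _))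
  have hℓ0 : 0 < ℓ := (div_pos hr (div_pos (by linarith) (by positivity))).trans hℓ.1
  have hlo : 0 < ℓ * (1 - 2 * ρ) := mul_pos hℓ0 (by linarith)
  have hs := one_add_two_mul_lt_sqrt_mul_one_sub_two_mul (cos_mem_Ioo_one_half_one hα).1
    (hρ.trans_le (min_le_right _ _))
  have hnear : ∀ d ∈ Ioo (ℓ * (1 - 2 * ρ)) (ℓ * (1 + 2 * ρ)),
      d ∈ Ioo (ℓ * (1 - 2 * ρ)) (√(1 / 2 + cos α₀) * (ℓ * (1 - 2 * ρ))) := fun d hd =>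
    ⟨hd.1, hd.2.trans (by rw [mul_left_comm]; exact mul_lt_mul_of_pos_left hs hℓ0)⟩
  have hA := angle_mem_Ioo_of_dist_mem_Ioo hlo hα (hnear _ hxy) (hnear _ hyz) (hnear _ hzx)
  have hB := angle_mem_Ioo_of_dist_mem_Ioo hlo hα (hnear _ hyz) (hnear _ hzx) (hnear _ hxy)
  have hC := angle_mem_Ioo_of_dist_mem_Ioo hlo hα (hnear _ hzx) (hnear _ hxy) (hnear _ hyz)
  have hδ := circumradius_mem_Ioo_of_angle_lt_pi_div_two h hA.2 hB.2 hC.2 hxy hyz hzx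
  refine ⟨⟨?_, ?_⟩, hA.1, hB.1, hC.1⟩
  · exact (lt_mul_one_sub_two_mul_div_sqrt_three hℓ0.le hρ0.le hρ6 hℓ.1).trans hδ.1
  · exact hδ.2.trans (mul_one_add_two_mul_div_sqrt_three_lt hℓ0.le hρ0.le hρ6 hℓ.2)
end

section
/- For a chord of a circle and a point strictly inside the circle on the same side of the chord as a given arc, the angle subtended by the chord at the interior point is strictly greater than the angle subtended at any point on that arc. -/
/-! Let `w` be the second intersection of the ray from `x` through `x₀` with the circle. Since `x₀`
lies strictly between `x` and `w`, the point `w` is on the same side of the chord as `v`, so the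
inscribed angle theorem gives `∠ x v y = ∠ x w y`. By the exterior angle theorem in the triangle
`x₀ w y`, `∠ x x₀ y = ∠ x w y + ∠ x₀ y w`, and the last angle is positive because `y` is not on
the line `x w`. -/

open Real EuclideanGeometry

theorem Wbtw.sSameSide₂₃ {R V P : Type*} [CommRing R] [PartialOrder R] [IsStrictOrderedRing R]
    [AddCommGroup V] [Module R V] [AddTorsor V P] {s : AffineSubspace R P} {x y z : P}
    (h : Wbtw R x y z) (hx : x ∈ s) (hy : y ∉ s) : s.SSameSide y z :=
  ⟨h.wSameSide₂₃ hx, hy, fun hz => hy (affineSpan_pair_le_of_mem_of_mem hx hz h.mem_affineSpan)⟩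

namespace EuclideanGeometry

variable {V P : Type*} [NormedAddCommGroup V] [InnerProductSpace ℝ V] [MetricSpace P]
  [NormedAddTorsor V P]

theorem angle_lt_angle_of_sbtw {p₁ p p₂ p₃ : P} (h : Sbtw ℝ p₁ p p₂)
    (hp₃ : p₃ ∉ line[ℝ, p₁, p₂]) : ∠ p₁ p₂ p₃ < ∠ p₁ p p₃ := by
  have hpos : 0 < ∠ p p₃ p₂ := by
    refine angle_pos_of_not_collinear fun hcol => hp₃ ?_
    refine affineSpan_pair_le_of_mem_of_mem h.wbtw.mem_affineSpan
      (right_mem_affineSpan_pair ℝ _ _) ?_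
    exact hcol.mem_affineSpan_of_mem_of_ne (by simp) (by simp) (by simp) h.ne_right
  calc ∠ p₁ p₂ p₃ = ∠ p₃ p₂ p := by rw [angle_comm p₃ p₂ p, h.symm.angle_eq_left]
    _ < ∠ p p₃ p₂ + ∠ p₃ p₂ p := by linarith
    _ = ∠ p₁ p p₃ := by rw [angle_comm p₁ p p₃, exterior_angle_eq_angle_add_angle p₁ h]

theorem Sphere.angle_eq_of_sSameSide [Fact (Module.finrank ℝ V = 2)] {s : Sphere P}
    {p₁ p₂ p₃ p₄ : P} (hp₁ : p₁ ∈ s) (hp₂ : p₂ ∈ s) (hp₃ : p₃ ∈ s) (hp₄ : p₄ ∈ s)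
    (hs : line[ℝ, p₁, p₄].SSameSide p₂ p₃) : ∠ p₁ p₂ p₄ = ∠ p₁ p₃ p₄ := by
  have hp₁L : p₁ ∈ line[ℝ, p₁, p₄] := left_mem_affineSpan_pair ℝ p₁ p₄
  have hp₄L : p₄ ∈ line[ℝ, p₁, p₄] := right_mem_affineSpan_pair ℝ p₁ p₄
  have hp₁p₂ := ne_of_mem_of_not_mem hp₁L hs.left_notMem
  have hp₄p₂ := ne_of_mem_of_not_mem hp₄L hs.left_notMem
  have hp₁p₃ := ne_of_mem_of_not_mem hp₁L hs.right_notMem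
  have hp₄p₃ := ne_of_mem_of_not_mem hp₄L hs.right_notMem
  rcases eq_or_ne p₁ p₄ with rfl | hp₁p₄
  · rw [angle_self_of_ne hp₁p₂, angle_self_of_ne hp₁p₃]
  have : FiniteDimensional ℝ V := .of_fact_finrank_eq_two
  -- any orientation will do, since `∠` is the absolute value of `∡` for either one
  let _ : Module.Oriented ℝ V (Fin 2) :=
    ⟨(Module.finBasisOfFinrankEq ℝ V Fact.out).orientation⟩
  have hsign : (∡ p₁ p₂ p₄).sign ≠ 0 := fun h0 => hs.left_notMem
    ((oangle_sign_eq_zero_iff_collinear.1 h0).mem_affineSpan_of_mem_of_ne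
      (by simp) (by simp) (by simp) hp₁p₄)
  have hoangle : ∡ p₁ p₂ p₄ = ∡ p₁ p₃ p₄ :=
    (Real.Angle.two_zsmul_eq_iff_eq hsign (hs.oangle_sign_eq hp₁L hp₄L).symm).1
      (Sphere.two_zsmul_oangle_eq hp₁ hp₂ hp₃ hp₄ hp₁p₂.symm hp₄p₂.symm hp₁p₃.symm hp₄p₃.symm)
  rw [angle_eq_abs_oangle_toReal hp₁p₂ hp₄p₂, angle_eq_abs_oangle_toReal hp₁p₃ hp₄p₃, hoangle]

end EuclideanGeometry

theorem angle_lt_of_inside_circle_general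
    (c x y v x₀ : EuclideanSpace ℝ (Fin 2)) (R : ℝ)
    (hx : dist x c = R) (hy : dist y c = R) (hv : dist v c = R)
    (hxy : x ≠ y)
    (hin : dist x₀ c < R)
    (hside : (affineSpan ℝ {x, y}).SSameSide v x₀) :
    ∠ x v y < ∠ x x₀ y := by
  have : Fact (Module.finrank ℝ (EuclideanSpace ℝ (Fin 2)) = 2) := ⟨finrank_euclideanSpace_fin⟩
  let s : Sphere (EuclideanSpace ℝ (Fin 2)) := ⟨c, R⟩
  set w := s.secondInter x (x₀ -ᵥ x)
  have hxs : x ∈ s := hx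
  have hsbtw : Sbtw ℝ x x₀ w := Sphere.sbtw_secondInter hxs hin
  have hvw : line[ℝ, x, y].SSameSide v w :=
    hside.trans (hsbtw.wbtw.sSameSide₂₃ (left_mem_affineSpan_pair ℝ x y) hside.right_notMem)
  have hy_notMem : y ∉ line[ℝ, x, w] := fun hyL => hvw.right_notMem
    ((collinear_insert_of_mem_affineSpan_pair hyL).mem_affineSpan_of_mem_of_ne
      (by simp) (by simp) (by simp) hxy)
  calc ∠ x v y = ∠ x w y :=
        Sphere.angle_eq_of_sSameSide hxs hv ((Sphere.secondInter_mem _).2 hxs) hy hvw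
    _ < ∠ x x₀ y := angle_lt_angle_of_sbtw hsbtw hy_notMem

theorem angle_lt_of_inside_circle
    (c x y v x₀ : EuclideanSpace ℝ (Fin 2)) (R : ℝ) (hR : 0 < R)
    (hx : dist x c = R) (hy : dist y c = R) (hv : dist v c = R)
    (hxy : x ≠ y) (hvx : v ≠ x) (hvy : v ≠ y)
    (hin : dist x₀ c < R)
    (hside : (affineSpan ℝ {x, y}).SSameSide v x₀) :
    ∠ x v y < ∠ x x₀ y :=
  angle_lt_of_inside_circle_general c x y v x₀ R hx hy hv hxy hin hside
end
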